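/- arXiv:2311.10666 — 4 statements merged into one kernel-verified Lean document; each statement's English description precedes it below -/
import Mathlib

section
/- Let d, k be positive integers with k ≥ 2 and 2^(k-2) < d, and let X ⊆ [0,1]^d be a finite set of points that intersects every box B^{A,j} for all A ⊆ {1,…,d} with #A = 2^(k-2) and all j ∈ {1,…,d} \ A, where B^{A,j} = I_1 × ⋯ × I_d with I_j = (0,2^(1-k)), I_i = (2^(1-k),1) for i ∈ A, and I_i = (0,1) otherwise. For j ∈ {1,…,d}, define F_j = {x ∈ X : x_j < 2^(1-k)}. Then the family {F_1, …, F_d} is 2^(k-2)-cover-free: for every j and every set A ⊆ {1,…,d}\{j} with #A = 2^(k-2), F_j is not contained in the union of the F_i for i ∈ A. -/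
theorem Finset.filter_not_subset_biUnion_filter {α ι : Type*} [DecidableEq α]
    (X : Finset α) (p : ι → α → Prop) [∀ i, DecidablePred (p i)] (j : ι) (A : Finset ι)
    {x : α} (hxX : x ∈ X) (hxj : p j x) (hxA : ∀ i ∈ A, ¬ p i x) :
    ¬ X.filter (p j) ⊆ A.biUnion fun i => X.filter (p i) := by
  intro hsub
  have hx := hsub (mem_filter.2 ⟨hxX, hxj⟩)
  obtain ⟨i, hiA, -, hxi⟩ := by simpa only [mem_biUnion, mem_filter] using hx
  exact hxA i hiA hxi

open Classical in
theorem cover_free_family_general (d k : ℕ)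
    (X : Finset (Fin d → ℝ))
    (hhit : ∀ A : Finset (Fin d), A.card = 2 ^ (k - 2) → ∀ j ∉ A, ∃ x ∈ X,
      (0 < x j ∧ x j < (2 : ℝ) ^ ((1 : ℤ) - k)) ∧
      (∀ i ∈ A, (2 : ℝ) ^ ((1 : ℤ) - k) < x i ∧ x i < 1) ∧
      (∀ i, i ≠ j → i ∉ A → 0 < x i ∧ x i < 1)) :
    ∀ (j : Fin d) (A : Finset (Fin d)), A.card = 2 ^ (k - 2) → j ∉ A →
      ¬ ((X.filter fun x => x j < (2 : ℝ) ^ ((1 : ℤ) - k)) ⊆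
        A.biUnion fun i => X.filter fun x => x i < (2 : ℝ) ^ ((1 : ℤ) - k)) := by
  intro j A hA hjA
  obtain ⟨x, hxX, ⟨-, hxj⟩, hxA, -⟩ := hhit A hA j hjA
  exact X.filter_not_subset_biUnion_filter (fun i x => x i < (2 : ℝ) ^ ((1 : ℤ) - k)) j A
    hxX hxj fun i hi => not_lt.2 (hxA i hi).1.le

open Classical in
theorem cover_free_family (d k : ℕ) (hk : 2 ≤ k) (hkd : 2 ^ (k - 2) < d)
    (X : Finset (Fin d → ℝ)) (hX : ∀ x ∈ X, ∀ i, x i ∈ Set.Icc (0 : ℝ) 1)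
    (hhit : ∀ A : Finset (Fin d), A.card = 2 ^ (k - 2) → ∀ j ∉ A, ∃ x ∈ X,
      (0 < x j ∧ x j < (2 : ℝ) ^ ((1 : ℤ) - k)) ∧
      (∀ i ∈ A, (2 : ℝ) ^ ((1 : ℤ) - k) < x i ∧ x i < 1) ∧
      (∀ i, i ≠ j → i ∉ A → 0 < x i ∧ x i < 1)) :
    ∀ (j : Fin d) (A : Finset (Fin d)), A.card = 2 ^ (k - 2) → j ∉ A →
      ¬ ((X.filter fun x => x j < (2 : ℝ) ^ ((1 : ℤ) - k)) ⊆
        A.biUnion fun i => X.filter fun x => x i < (2 : ℝ) ^ ((1 : ℤ) - k)) :=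
  cover_free_family_general d k X hhit
end

section
/- Let d ≥ 2 be an integer and let ε be a real number with 1/8 < ε ≤ 1/4. Then every finite set X ⊆ [0,1]^d with disp(X) ≤ ε satisfies #X ≥ log₂ d; consequently N(ε,d) ≥ log₂ d > (3/64) · (log d)/(ε² · log(1/ε)). -/
/-!
If `disp X ≤ 1/4`, the sets `F_j = {x ∈ X | x_j < 1/2}` are pairwise distinct: were `F_i = F_j`
for `i ≠ j`, pick `c < 1/2` with no `x_i` in `(c, 1/2)`; then the box with `I_i = (c, 1)`,
`I_j = (0, 1/2)` and all other sides `(0, 1)` avoids `X` and has volume `(1 - c)/2 > 1/4`.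
Hence `d ≤ 2^#X`. The bound transfers to `N(ε, d)` because the infimum defining it is attained:
the grid `{1/8, …, 7/8}^d` has dispersion `≤ 1/8 < ε`.
-/

/-- The dispersion of a set of points `X ⊆ [0,1]^d`: the supremum of volumes of
open axis-parallel boxes in `[0,1]^d` avoiding `X`. -/
noncomputable def disp {d : ℕ} (X : Set (Fin d → ℝ)) : ℝ :=
  sSup {v | ∃ a b : Fin d → ℝ, (∀ i, 0 ≤ a i ∧ a i < b i ∧ b i ≤ 1) ∧
    (∀ x ∈ X, ∃ i, x i ∉ Set.Ioo (a i) (b i)) ∧ v = ∏ i, (b i - a i)}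

/-- The minimal dispersion of an `n`-point subset of `[0,1]^d`. -/
noncomputable def dispStar (n d : ℕ) : ℝ :=
  sInf {v | ∃ X : Finset (Fin d → ℝ),
    (∀ x ∈ X, ∀ i, x i ∈ Set.Icc (0 : ℝ) 1) ∧ X.card = n ∧ v = disp (X : Set (Fin d → ℝ))}

/-- `N(ε,d)`: the minimal number of points of a subset of `[0,1]^d` with dispersion `≤ ε`. -/
noncomputable def Nfun (ε : ℝ) (d : ℕ) : ℕ :=
  sInf {n | ∃ X : Finset (Fin d → ℝ),
    (∀ x ∈ X, ∀ i, x i ∈ Set.Icc (0 : ℝ) 1) ∧ X.card = n ∧ disp (X : Set (Fin d → ℝ)) ≤ ε}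

open Set

section Box

variable {d : ℕ} {a b : Fin d → ℝ}

lemma prod_box_le_side (hab : ∀ k, 0 ≤ a k ∧ a k < b k ∧ b k ≤ 1) (i : Fin d) :
    ∏ k, (b k - a k) ≤ b i - a i := by
  rw [← Finset.mul_prod_erase _ _ (Finset.mem_univ i)]
  refine mul_le_of_le_one_right (by linarith [hab i]) ?_
  exact Finset.prod_le_one (fun k _ => by linarith [hab k]) (fun k _ => by linarith [hab k])

lemma le_disp {X : Set (Fin d → ℝ)} (hab : ∀ k, 0 ≤ a k ∧ a k < b k ∧ b k ≤ 1)
    (hX : ∀ x ∈ X, ∃ k, x k ∉ Ioo (a k) (b k)) : ∏ k, (b k - a k) ≤ disp X := by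
  refine le_csSup ⟨1, ?_⟩ ⟨a, b, hab, hX, rfl⟩
  rintro v ⟨a, b, hab, -, rfl⟩
  exact Finset.prod_le_one (fun k _ => by linarith [hab k]) (fun k _ => by linarith [hab k])

lemma disp_le {X : Set (Fin d → ℝ)} {ε : ℝ} (hε : 0 ≤ ε)
    (h : ∀ a b : Fin d → ℝ, (∀ k, 0 ≤ a k ∧ a k < b k ∧ b k ≤ 1) →
      (∀ x ∈ X, ∃ k, x k ∉ Ioo (a k) (b k)) → ∏ k, (b k - a k) ≤ ε) :
    disp X ≤ ε := by
  refine Real.sSup_le ?_ hε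
  rintro v ⟨a, b, hab, hX, rfl⟩
  exact h a b hab hX

end Box

lemma exists_Ioo_disjoint_finset (s : Finset ℝ) {l u : ℝ} (hlu : l < u) :
    ∃ c ∈ Ioo l u, ∀ x ∈ s, x ∉ Ioo c u := by
  refine (Filter.Eventually.and (Ioo_mem_nhdsLT hlu) ?_).exists
  rw [Filter.eventually_all_finset]
  intro x _
  rcases lt_or_ge x u with hxu | hux
  · filter_upwards [Ioo_mem_nhdsLT hxu] with c hc hxc using hc.1.not_gt hxc.1
  · exact Filter.Eventually.of_forall fun c hxc => hux.not_gt hxc.2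

lemma injective_filter_lt_half {d : ℕ} {X : Finset (Fin d → ℝ)}
    (hX : disp (X : Set (Fin d → ℝ)) ≤ 1 / 4) :
    Function.Injective fun j : Fin d => X.filter (fun x => x j < 1 / 2) := by
  intro i j (hij : X.filter (fun x => x i < 1 / 2) = X.filter (fun x => x j < 1 / 2))
  by_contra hne
  obtain ⟨c, hc, hgap⟩ :=
    exists_Ioo_disjoint_finset (X.image (· i)) (show (0 : ℝ) < 1 / 2 by norm_num)
  set a : Fin d → ℝ := Function.update 0 i c
  set b : Fin d → ℝ := Function.update 1 j (1 / 2)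
  have hab : ∀ k, 0 ≤ a k ∧ a k < b k ∧ b k ≤ 1 := by
    intro k
    rcases eq_or_ne k i with rfl | hki <;> rcases eq_or_ne k j with rfl | hkj
    · exact absurd rfl hne
    · simp [a, b, hkj, hc.1.le, hc.2.trans one_half_lt_one]
    · norm_num [a, b, hki]
    · simp [a, b, hki, hkj]
  have havoid : ∀ x ∈ (X : Set (Fin d → ℝ)), ∃ k, x k ∉ Ioo (a k) (b k) := by
    intro x hx
    by_cases hxj : x j < 1 / 2
    · have hxi : x i < 1 / 2 := by
        have : x ∈ X.filter (fun x => x j < 1 / 2) := Finset.mem_filter.2 ⟨hx, hxj⟩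
        rw [← hij, Finset.mem_filter] at this
        exact this.2
      refine ⟨i, fun hx' => hgap (x i) (Finset.mem_image_of_mem _ hx) ⟨?_, hxi⟩⟩
      simpa [a] using hx'.1
    · exact ⟨j, fun hx' => hxj (by simpa [b] using hx'.2)⟩
  have hvol : ∏ k, (b k - a k) = (1 - c) * (1 / 2) := by
    rw [Finset.prod_eq_mul_of_mem i j (Finset.mem_univ i) (Finset.mem_univ j) hne]
    · simp [a, b, hne, Ne.symm hne]
    · intro k _ hk
      simp [a, b, hk.1, hk.2]
  have := le_disp hab havoid
  linarith [hc.2]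

lemma le_two_pow_card_of_disp_le {d : ℕ} {X : Finset (Fin d → ℝ)}
    (hX : disp (X : Set (Fin d → ℝ)) ≤ 1 / 4) : d ≤ 2 ^ X.card := by
  simpa using Finset.card_le_card_of_injOn (s := Finset.univ) _
    (fun j _ => Finset.mem_powerset.2 (Finset.filter_subset _ X))
    (injective_filter_lt_half hX).injOn

lemma logb_two_le_card_of_disp_le {d : ℕ} {X : Finset (Fin d → ℝ)}
    (hX : disp (X : Set (Fin d → ℝ)) ≤ 1 / 4) : Real.logb 2 d ≤ X.card := by
  rcases d.eq_zero_or_pos with rfl | hd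
  · simp
  rw [Real.logb_le_iff_le_rpow one_lt_two (by exact_mod_cast hd), Real.rpow_natCast]
  exact_mod_cast le_two_pow_card_of_disp_le hX

noncomputable def unitGrid (n : ℕ) : Finset ℝ :=
  (Finset.range n).image fun k : ℕ => ((k : ℝ) + 1) / (n + 1)

lemma unitGrid_subset_Icc (n : ℕ) : (unitGrid n : Set ℝ) ⊆ Icc 0 1 := by
  simp only [unitGrid, Finset.coe_image, Finset.coe_range, Set.image_subset_iff]
  intro k hk
  have : (k : ℝ) + 1 ≤ n + 1 := by exact_mod_cast Nat.succ_le_succ hk.le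
  exact ⟨by positivity, div_le_one_of_le₀ this (by positivity)⟩

lemma exists_mem_unitGrid_Ioo (n : ℕ) {s t : ℝ} (hs : 0 ≤ s) (ht : t ≤ 1)
    (hst : 1 / (n + 1) < t - s) : ∃ g ∈ unitGrid n, g ∈ Ioo s t := by
  have hn : (0 : ℝ) < n + 1 := by positivity
  set k := ⌊(n + 1) * s⌋₊
  have hk := Nat.floor_le (mul_nonneg hn.le hs)
  have hk' := Nat.lt_floor_add_one ((n + 1) * s)
  rw [div_lt_iff₀' hn] at hst
  refine ⟨(k + 1) / (n + 1), Finset.mem_image_of_mem _ (Finset.mem_range.2 ?_), ?_, ?_⟩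
  · have : (k : ℝ) < n := by nlinarith
    exact_mod_cast this
  · rw [lt_div_iff₀ hn]; linarith
  · rw [div_lt_iff₀ hn]; nlinarith

lemma disp_piFinset_unitGrid_le (d n : ℕ) :
    disp (Fintype.piFinset (fun _ : Fin d => unitGrid n) : Set (Fin d → ℝ)) ≤ 1 / (n + 1) := by
  refine disp_le (by positivity) fun a b hab hX => ?_
  obtain ⟨i, hi⟩ : ∃ i, ∀ g ∈ unitGrid n, g ∉ Ioo (a i) (b i) := by
    by_contra! h
    choose g hg hgab using h
    obtain ⟨i, hi⟩ := hX g (by simpa using hg)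
    exact hi (hgab i)
  refine (prod_box_le_side hab i).trans (not_lt.1 fun hlt => ?_)
  obtain ⟨g, hg, hgab⟩ := exists_mem_unitGrid_Ioo n (hab i).1 (hab i).2.2 hlt
  exact hi g hg hgab

lemma exists_card_eq_Nfun {ε : ℝ} {d : ℕ} {X : Finset (Fin d → ℝ)}
    (hX01 : ∀ x ∈ X, ∀ i, x i ∈ Icc (0 : ℝ) 1) (hX : disp (X : Set (Fin d → ℝ)) ≤ ε) :
    ∃ Y : Finset (Fin d → ℝ), (∀ y ∈ Y, ∀ i, y i ∈ Icc (0 : ℝ) 1) ∧ Y.card = Nfun ε d ∧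
      disp (Y : Set (Fin d → ℝ)) ≤ ε :=
  Nat.sInf_mem (s := {n | ∃ Y : Finset (Fin d → ℝ), (∀ y ∈ Y, ∀ i, y i ∈ Icc (0 : ℝ) 1) ∧
    Y.card = n ∧ disp (Y : Set (Fin d → ℝ)) ≤ ε}) ⟨X.card, X, hX01, rfl, hX⟩

/- `x ↦ x² log(1/x)` increases on `[1/8, 1/4]`; the tangent bound `log (8ε) ≤ 8ε - 1` turns this
into a cubic inequality in `ε`. -/
lemma three_div_sixtyfour_mul_log_two_lt {ε : ℝ} (h1 : 1 / 8 < ε) (h2 : ε ≤ 1 / 4) :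
    3 / 64 * Real.log 2 < ε ^ 2 * Real.log (1 / ε) := by
  have hL := Real.log_two_gt_d9
  have hlog : Real.log (1 / ε) = 3 * Real.log 2 - Real.log (8 * ε) := by
    rw [Real.log_mul (by norm_num) (by positivity), one_div, Real.log_inv,
      show (8 : ℝ) = 2 ^ 3 by norm_num, Real.log_pow]
    push_cast; ring
  have htangent : Real.log (8 * ε) ≤ 8 * ε - 1 := Real.log_le_sub_one_of_pos (by positivity)
  rw [hlog]
  have hε : 0 < ε - 1 / 8 := sub_pos.2 h1
  nlinarith [mul_nonneg (sq_nonneg ε) (sub_nonneg.2 htangent),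
    mul_nonneg (mul_nonneg hε.le (sub_nonneg.2 h2)) hε.le, mul_pos (mul_pos hε hε) hε]

theorem case_k_eq_two (d : ℕ) (hd : 2 ≤ d) (ε : ℝ) (hε1 : 1 / 8 < ε) (hε2 : ε ≤ 1 / 4) :
    (∀ X : Finset (Fin d → ℝ), (∀ x ∈ X, ∀ i, x i ∈ Set.Icc (0 : ℝ) 1) →
      disp (X : Set (Fin d → ℝ)) ≤ ε → (X.card : ℝ) ≥ Real.logb 2 d) ∧
    (Nfun ε d : ℝ) ≥ Real.logb 2 d ∧
    Real.logb 2 d > (3 / 64) * Real.log d / (ε ^ 2 * Real.log (1 / ε)) := by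
  have card_bound : ∀ X : Finset (Fin d → ℝ), disp (X : Set (Fin d → ℝ)) ≤ ε →
      Real.logb 2 d ≤ X.card := fun X hX => logb_two_le_card_of_disp_le (hX.trans hε2)
  refine ⟨fun X _ hX => card_bound X hX, ?_, ?_⟩
  · have hgrid := (disp_piFinset_unitGrid_le d 7).trans (by norm_num [hε1.le] : _ ≤ ε)
    obtain ⟨Y, -, hY, hYε⟩ := exists_card_eq_Nfun
      (fun x hx i => unitGrid_subset_Icc 7 (Fintype.mem_piFinset.1 hx i)) hgrid
    exact hY ▸ card_bound Y hYε
  · have hlogd : 0 < Real.log d := Real.log_pos (by exact_mod_cast hd)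
    have hkey := three_div_sixtyfour_mul_log_two_lt hε1 hε2
    have hden : 0 < ε ^ 2 * Real.log (1 / ε) := hkey.trans' (by positivity)
    rw [Real.logb, gt_iff_lt, div_lt_div_iff₀ hden (Real.log_pos one_lt_two)]
    nlinarith
end

section
/- There exist constants c₁, c₂ > 0 such that, assuming the lower bound N(ε,d) > (1/1920)·(log d)/(ε²·log(1/ε)) valid for 1/(4√d) ≤ ε ≤ 1/4, for all integers d ≥ 2 and n with 2 log d ≤ n ≤ c₁ d, the minimal dispersion satisfies disp*(n,d) ≥ c₂ · ((log d)/n)^(1/2) · (log(n/log d))^(-1/2). -/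
/-!
Put `x = log d / n` and `ε = scale x = (1/200) √(x / log (1/x))`, the right-hand side of the bound
with `c₂ = 1/200`. The hypotheses `2 log d ≤ n ≤ d / 2500` place `ε` in the range
`[1/(4√d), 1/4]` where the lower bound on `N(ε, d)` applies, and `log (1/ε) ≤ 9 log (1/x)` gives
`log d / (1920 ε² log (1/ε)) ≥ n`. Hence `N(ε, d) > n`, i.e. no `n`-point set has dispersion
`< ε`, so `disp*(n, d) ≥ ε`.
-/

open Real

lemma exists_finset_subset_cube_card {d : ℕ} (hd : 0 < d) (n : ℕ) :
    ∃ X : Finset (Fin d → ℝ), (∀ x ∈ X, ∀ i, x i ∈ Set.Icc (0 : ℝ) 1) ∧ X.card = n := by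
  have : Nonempty (Fin d) := ⟨⟨0, hd⟩⟩
  have hinf : (Function.const (Fin d) '' Set.Icc (0 : ℝ) 1).Infinite :=
    (Set.Icc_infinite zero_lt_one).image Function.const_injective.injOn
  obtain ⟨X, hX, hcard⟩ := hinf.exists_subset_card_eq n
  refine ⟨X, fun x hx i => ?_, hcard⟩
  obtain ⟨t, ht, rfl⟩ := hX hx
  exact ht

lemma le_dispStar_of_lt_Nfun {n d : ℕ} {ε : ℝ} (hd : 0 < d) (h : n < Nfun ε d) :
    ε ≤ dispStar n d := by
  by_contra! hlt
  rw [dispStar] at hlt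
  -- an `n`-point set is needed: the `sInf` of an empty set of reals is the junk value `0`
  obtain ⟨X₀, hX₀, hcard₀⟩ := exists_finset_subset_cube_card hd n
  obtain ⟨_, ⟨X, hX, hcard, rfl⟩, hdisp⟩ :=
    exists_lt_of_csInf_lt (by exact ⟨_, X₀, hX₀, hcard₀, rfl⟩) hlt
  exact (Nat.sInf_le (by exact ⟨X, hX, hcard, hdisp.le⟩)).not_gt h

noncomputable def scale (x : ℝ) : ℝ := √(x / log (1 / x)) / 200

lemma scale_eq_rpow {x : ℝ} (hL : 0 ≤ log (1 / x)) :
    1 / 200 * x ^ ((1 : ℝ) / 2) * log (1 / x) ^ (-(1 : ℝ) / 2) = scale x := by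
  rw [scale, sqrt_div' _ hL, sqrt_eq_rpow, sqrt_eq_rpow, neg_div, rpow_neg hL]
  ring

section scale

variable {x : ℝ} (hx₀ : 0 < x) (hx : x ≤ 1 / 2)
include hx₀ hx

lemma le_log_one_div : x ≤ log (1 / x) := by
  have := one_sub_inv_le_log_of_pos (one_div_pos.2 hx₀)
  rw [inv_div, div_one] at this
  linarith [hx]

lemma log_one_div_pos : 0 < log (1 / x) := hx₀.trans_le (le_log_one_div hx₀ hx)

lemma scale_pos : 0 < scale x :=
  div_pos (sqrt_pos.2 (div_pos hx₀ (log_one_div_pos hx₀ hx))) (by norm_num)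

lemma scale_sq : scale x ^ 2 = x / log (1 / x) / 40000 := by
  rw [scale, div_pow, sq_sqrt (div_nonneg hx₀.le (log_one_div_pos hx₀ hx).le)]
  norm_num

lemma scale_le_one_div_four : scale x ≤ 1 / 4 := by
  have : √(x / log (1 / x)) ≤ 1 :=
    sqrt_le_one.2 ((div_le_one (log_one_div_pos hx₀ hx)).2 (le_log_one_div hx₀ hx))
  rw [scale]
  linarith

lemma log_one_div_scale_le : log (1 / scale x) ≤ 9 * log (1 / x) := by
  set L := log (1 / x)
  have hL : 0 < L := log_one_div_pos hx₀ hx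
  have hlog2 : log 2 ≤ L := log_le_log (by norm_num) (by rw [le_one_div (by norm_num) hx₀]; exact hx)
  have hlog200 : log 200 ≤ 8 * log 2 :=
    calc log 200 ≤ log (2 ^ 8) := log_le_log (by norm_num) (by norm_num)
      _ = 8 * log 2 := by rw [log_pow]; norm_num
  have hlogL : log L ≤ L := by linarith [log_le_sub_one_of_pos hL]
  have hlogx : log x = -L := by rw [show L = log (1 / x) from rfl, one_div, log_inv, neg_neg]
  have hexpand : log (1 / scale x) = log 200 + (L + log L) / 2 := by
    rw [scale, one_div_div, log_div (by norm_num) (sqrt_pos.2 (div_pos hx₀ hL)).ne',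
      log_sqrt (div_nonneg hx₀.le hL.le), log_div hx₀.ne' hL.ne', hlogx]
    ring
  rw [hexpand]
  linarith

lemma scale_sq_mul_log_one_div_scale_le : scale x ^ 2 * log (1 / scale x) ≤ x / 4000 := by
  have hL := log_one_div_pos hx₀ hx
  calc scale x ^ 2 * log (1 / scale x)
      ≤ x / log (1 / x) / 40000 * (9 * log (1 / x)) := by
        rw [scale_sq hx₀ hx]
        exact mul_le_mul_of_nonneg_left (log_one_div_scale_le hx₀ hx) (by positivity)
    _ = 9 * x / 40000 := by field_simp
    _ ≤ x / 4000 := by linarith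

end scale

lemma one_div_four_sqrt_le_scale {d n : ℕ} (hd : 2 ≤ d) (hn : 2 * log d ≤ n)
    (hnd : (n : ℝ) ≤ 1 / 2500 * d) :
    1 / (4 * √d) ≤ scale (log d / n) := by
  have hd' : (2 : ℝ) ≤ d := by exact_mod_cast hd
  have hlogd : 1 / 2 ≤ log d := by
    have := one_sub_inv_le_log_of_pos (by linarith : (0 : ℝ) < d)
    have : (d : ℝ)⁻¹ ≤ 1 / 2 := by rw [inv_le_comm₀ (by linarith) (by norm_num)]; linarith
    linarith
  have hn₀ : (0 : ℝ) < n := by linarith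
  have hx₀ : 0 < log d / n := div_pos (by linarith) hn₀
  have hx : log d / n ≤ 1 / 2 := by rw [div_le_iff₀ hn₀]; linarith
  have hL : log (1 / (log d / n)) ≤ log d := by
    refine log_le_log (by positivity) ?_
    rw [one_div_div, div_le_iff₀ (by linarith)]
    nlinarith
  refine le_of_pow_le_pow_left₀ two_ne_zero (scale_pos hx₀ hx).le ?_
  calc (1 / (4 * √d)) ^ 2 = 1 / (16 * d) := by
        rw [div_pow, mul_pow, sq_sqrt (by linarith)]
        norm_num
    _ ≤ 1 / (40000 * n) := one_div_le_one_div_of_le (by positivity) (by linarith)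
    _ = log d / n / log d / 40000 := by field_simp
    _ ≤ log d / n / log (1 / (log d / n)) / 40000 := by
        gcongr
        exact log_one_div_pos hx₀ hx
    _ = scale (log d / n) ^ 2 := (scale_sq hx₀ hx).symm

theorem corollary_dispStar
    (hN : ∀ (d : ℕ) (ε : ℝ), 2 ≤ d → 1 / (4 * Real.sqrt d) ≤ ε → ε ≤ 1 / 4 →
      (Nfun ε d : ℝ) > (1 / 1920) * Real.log d / (ε ^ 2 * Real.log (1 / ε))) :
    ∃ c₁ c₂ : ℝ, 0 < c₁ ∧ 0 < c₂ ∧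
      ∀ d n : ℕ, 2 ≤ d → 2 * Real.log d ≤ (n : ℝ) → (n : ℝ) ≤ c₁ * d →
        dispStar n d ≥ c₂ * (Real.log d / n) ^ ((1 : ℝ) / 2) *
          (Real.log ((n : ℝ) / Real.log d)) ^ (-(1 : ℝ) / 2) := by
  refine ⟨1 / 2500, 1 / 200, by norm_num, by norm_num, fun d n hd hn hnd => ?_⟩
  have hlogd : 0 < log d := log_pos (by exact_mod_cast hd)
  have hn₀ : (0 : ℝ) < n := by linarith
  set x := log d / n
  have hx₀ : 0 < x := div_pos hlogd hn₀
  have hx : x ≤ 1 / 2 := by rw [div_le_iff₀ hn₀]; linarith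
  rw [show (n : ℝ) / log d = 1 / x from (one_div_div _ _).symm,
    scale_eq_rpow (log_one_div_pos hx₀ hx).le]
  have hscale := scale_pos hx₀ hx
  have hlog_scale : 0 < log (1 / scale x) :=
    log_pos ((one_lt_div hscale).2 ((scale_le_one_div_four hx₀ hx).trans_lt (by norm_num)))
  have hlt : (n : ℝ) < Nfun (scale x) d :=
    calc (n : ℝ) ≤ 1 / 1920 * log d / (x / 4000) := by
          have hnx : (n : ℝ) * x = log d := mul_div_cancel₀ _ hn₀.ne'
          rw [le_div_iff₀ (by positivity)]
          linarith
      _ ≤ 1 / 1920 * log d / (scale x ^ 2 * log (1 / scale x)) := by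
          gcongr
          exact scale_sq_mul_log_one_div_scale_le hx₀ hx
      _ < Nfun (scale x) d :=
          hN d _ hd (one_div_four_sqrt_le_scale hd hn hnd) (scale_le_one_div_four hx₀ hx)
  exact le_dispStar_of_lt_Nfun (by omega) (by exact_mod_cast hlt)
end

section
/- Let d ≥ 2 and r ≥ 1 be integers with r < d, and let B be the collection of boxes B^{A,j} ⊆ [0,1]^d over all A ⊆ {1,…,d} with #A = r and j ∈ {1,…,d}\A (where B^{A,j} restricts coordinate j to (0,δ), coordinates in A to (δ,1) for a fixed δ ∈ (0,1), and leaves the rest unrestricted). Then #B = C(d,r)·(d−r), and any set X ⊆ [0,1]^d hitting all boxes in B gives rise, via F_j = {x ∈ X : x_j < δ}, to an r-cover-free family of d subsets of X. -/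
/-! The boxes are pairwise distinct, and a single point of each box tells it apart from all the
others: the point with coordinate `δ/2` at `j`, `(1+δ)/2` on `A` and exactly `δ` elsewhere lies
in `B^{A',j'}` only if `j' = j` and `A' ⊆ A`. Counting the pairs `(A, j)` gives the cardinality;
cover-freeness is immediate, since a point of `B^{A,j}` lies in `F_j` but in no `F_i`, `i ∈ A`. -/

/-- The test box `B^{A,j}` with parameter `δ`: coordinate `j` restricted to `(0,δ)`,
coordinates in `A` restricted to `(δ,1)`, the remaining coordinates restricted to `(0,1)`. -/
def testBox {d : ℕ} (δ : ℝ) (A : Finset (Fin d)) (j : Fin d) : Set (Fin d → ℝ) :=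
  {x | (0 < x j ∧ x j < δ) ∧ (∀ i ∈ A, δ < x i ∧ x i < 1) ∧
    ∀ i, i ≠ j → i ∉ A → 0 < x i ∧ x i < 1}

section TestBox

variable {d : ℕ} {δ : ℝ}

noncomputable def testBoxWitness (δ : ℝ) (A : Finset (Fin d)) (j : Fin d) : Fin d → ℝ :=
  fun i => if i = j then δ / 2 else if i ∈ A then (1 + δ) / 2 else δ

lemma testBoxWitness_mem_testBox (hδ : δ ∈ Set.Ioo (0 : ℝ) 1) {A : Finset (Fin d)} {j : Fin d}
    (hj : j ∉ A) : testBoxWitness δ A j ∈ testBox δ A j := by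
  obtain ⟨hδ0, hδ1⟩ := hδ
  refine ⟨?_, fun i hi => ?_, fun i hij hiA => ?_⟩
  · simp only [testBoxWitness, if_true]
    constructor <;> linarith
  · have hij : i ≠ j := fun h => hj (h ▸ hi)
    simp only [testBoxWitness, if_neg hij, if_pos hi]
    constructor <;> linarith
  · simp only [testBoxWitness, if_neg hij, if_neg hiA]
    exact ⟨hδ0, hδ1⟩

lemma eq_and_subset_of_testBoxWitness_mem (hδ : δ ∈ Set.Ioo (0 : ℝ) 1)
    {A A' : Finset (Fin d)} {j j' : Fin d} (h : testBoxWitness δ A j ∈ testBox δ A' j') :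
    j' = j ∧ A' ⊆ A := by
  obtain ⟨hδ0, hδ1⟩ := hδ
  have hj' : j' = j := by
    by_contra hne
    have hlt := h.1.2
    simp only [testBoxWitness, if_neg hne] at hlt
    split_ifs at hlt <;> linarith
  refine ⟨hj', fun i hi => ?_⟩
  by_contra hiA
  have hgt := (h.2.1 i hi).1
  simp only [testBoxWitness, if_neg hiA] at hgt
  split_ifs at hgt <;> linarith

lemma testBox_injOn (hδ : δ ∈ Set.Ioo (0 : ℝ) 1) :
    Set.InjOn (fun p : (_ : Finset (Fin d)) × Fin d => testBox δ p.1 p.2) {p | p.2 ∉ p.1} := by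
  rintro ⟨A, j⟩ hj ⟨A', j'⟩ hj' (h : testBox δ A j = testBox δ A' j')
  obtain ⟨rfl, hA'A⟩ := eq_and_subset_of_testBoxWitness_mem hδ
    (h ▸ testBoxWitness_mem_testBox hδ hj :)
  obtain ⟨-, hAA'⟩ := eq_and_subset_of_testBoxWitness_mem hδ
    (h.symm ▸ testBoxWitness_mem_testBox hδ hj' :)
  rw [hAA'.antisymm hA'A]

end TestBox

lemma card_sigma_powersetCard_compl {α : Type*} [Fintype α] [DecidableEq α] (r : ℕ) :
    ((Finset.univ.powersetCard r).sigma fun A : Finset α => Aᶜ).card =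
      (Fintype.card α).choose r * (Fintype.card α - r) := by
  rw [Finset.card_sigma, Finset.sum_congr rfl fun A hA => by
      rw [Finset.card_compl, (Finset.mem_powersetCard_univ.1 hA)],
    Finset.sum_const, smul_eq_mul, Finset.card_powersetCard, Finset.card_univ]

lemma not_filter_lt_subset_biUnion {ι β : Type*} [LinearOrder β] [DecidableEq (ι → β)]
    {X : Finset (ι → β)} {x : ι → β} {δ : β} {A : Finset ι} {j : ι} (hx : x ∈ X)
    (hxj : x j < δ) (hxA : ∀ i ∈ A, δ < x i) :
    ¬ (X.filter fun x => x j < δ) ⊆ A.biUnion fun i => X.filter fun x => x i < δ := by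
  intro hsub
  obtain ⟨i, hi, hxi⟩ := Finset.mem_biUnion.1 (hsub (Finset.mem_filter.2 ⟨hx, hxj⟩))
  exact lt_asymm (Finset.mem_filter.1 hxi).2 (hxA i hi)

open Classical in
theorem test_box_count_and_cover_free_general (d r : ℕ) (δ : ℝ) (hδ : δ ∈ Set.Ioo (0 : ℝ) 1) :
    {B : Set (Fin d → ℝ) | ∃ (A : Finset (Fin d)) (j : Fin d),
        A.card = r ∧ j ∉ A ∧ B = testBox δ A j}.ncard = Nat.choose d r * (d - r) ∧
    ∀ X : Finset (Fin d → ℝ),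
      (∀ (A : Finset (Fin d)) (j : Fin d), A.card = r → j ∉ A →
        ∃ x ∈ X, x ∈ testBox δ A j) →
      ∀ (j : Fin d) (A : Finset (Fin d)), A.card = r → j ∉ A →
        ¬ ((X.filter fun x => x j < δ) ⊆ A.biUnion fun i => X.filter fun x => x i < δ) := by
  refine ⟨?_, fun X hX j A hA hj => ?_⟩
  · set P := (Finset.univ.powersetCard r).sigma fun A : Finset (Fin d) => Aᶜ
    have hboxes : {B : Set (Fin d → ℝ) | ∃ (A : Finset (Fin d)) (j : Fin d),
        A.card = r ∧ j ∉ A ∧ B = testBox δ A j} = P.image fun p => testBox δ p.1 p.2 := by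
      ext B
      simp [P, eq_comm, and_assoc]
    rw [hboxes, Set.ncard_coe_finset, Finset.card_image_of_injOn
      ((testBox_injOn hδ).mono fun p hp => (Finset.mem_sigma.1 hp).2 |> Finset.mem_compl.1),
      card_sigma_powersetCard_compl, Fintype.card_fin]
  · obtain ⟨x, hx, hxB⟩ := hX A j hA hj
    exact not_filter_lt_subset_biUnion hx hxB.1.2 fun i hi => (hxB.2.1 i hi).1

open Classical in
theorem test_box_count_and_cover_free (d r : ℕ) (hd : 2 ≤ d) (hr : 1 ≤ r) (hrd : r < d)
    (δ : ℝ) (hδ : δ ∈ Set.Ioo (0 : ℝ) 1) :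
    {B : Set (Fin d → ℝ) | ∃ (A : Finset (Fin d)) (j : Fin d),
        A.card = r ∧ j ∉ A ∧ B = testBox δ A j}.ncard = Nat.choose d r * (d - r) ∧
    ∀ X : Finset (Fin d → ℝ),
      (∀ (A : Finset (Fin d)) (j : Fin d), A.card = r → j ∉ A →
        ∃ x ∈ X, x ∈ testBox δ A j) →
      ∀ (j : Fin d) (A : Finset (Fin d)), A.card = r → j ∉ A →
        ¬ ((X.filter fun x => x j < δ) ⊆ A.biUnion fun i => X.filter fun x => x i < δ) :=
  test_box_count_and_cover_free_general d r δ hδ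
end
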